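/- arXiv:1910.01672 — 6 statements merged into one kernel-verified Lean document; each statement's English description precedes it below -/
import Mathlib

section
/- Suppose p, q, p', q' are integers with 2 ≤ p < q, 2 ≤ p' < q', p ≤ p', gcd(p,q) = gcd(p',q') = 1, (p-1)(q-1) = (p'-1)(q'-1), and (p,q) ≠ (p',q'). If p' - p ≤ 1, then p' = p + 1, (p-1) divides (q'-1), and q = q' + (q'-1)/(p-1). -/
/-- If `2 ≤ p < q`, `2 ≤ p' < q'`, `p ≤ p'`, both pairs are coprime, the pairs are distinct,
`(p-1)(q-1) = (p'-1)(q'-1)`, and `p' - p ≤ 1`, then `p' = p + 1`, `(p-1) ∣ (q'-1)`, and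
`q = q' + (q'-1)/(p-1)`. -/
theorem equal_genus_arith (p q p' q' : ℕ) (hp : 2 ≤ p) (hq : p < q)
    (hp' : 2 ≤ p') (hq' : p' < q') (hpp' : p ≤ p')
    (hc : Nat.Coprime p q) (hc' : Nat.Coprime p' q')
    (hgen : (p - 1) * (q - 1) = (p' - 1) * (q' - 1))
    (hne : (p, q) ≠ (p', q'))
    (hle : p' - p ≤ 1) :
    p' = p + 1 ∧ (p - 1) ∣ (q' - 1) ∧ q = q' + (q' - 1) / (p - 1) := by
  rcases (by omega : p' = p ∨ p' = p + 1) with h | h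
  · subst h
    have hqq : q = q' := by
      have := Nat.eq_of_mul_eq_mul_left (by omega : 0 < p' - 1) hgen
      omega
    exact absurd (by rw [hqq]) hne
  · subst h
    have hcop : Nat.Coprime (p - 1) p := by
      have h1 : Nat.Coprime (p - 1) (p - 1 + 1) :=
        Nat.coprime_self_add_right.mpr (Nat.coprime_one_right _)
      have hs : p - 1 + 1 = p := by omega
      rwa [hs] at h1
    have hgen' : (p - 1) * (q - 1) = p * (q' - 1) := by
      have : p + 1 - 1 = p := by omega
      rwa [this] at hgen
    have hd : (p - 1) ∣ (q' - 1) :=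
      hcop.dvd_of_dvd_mul_left ⟨q - 1, hgen'.symm⟩
    obtain ⟨k, hk⟩ := hd
    have hdiv : (q' - 1) / (p - 1) = k := by
      rw [hk, Nat.mul_div_cancel_left _ (by omega : 0 < p - 1)]
    have hq1 : q - 1 = p * k := by
      have : (p - 1) * (q - 1) = (p - 1) * (p * k) := by
        rw [hgen', hk]; ring
      exact Nat.eq_of_mul_eq_mul_left (by omega) this
    refine ⟨rfl, ⟨k, hk⟩, ?_⟩
    rw [hdiv]
    have h2 : p * k = (p - 1) * k + 1 * k := by
      rw [← Nat.add_mul]; congr 1; omega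
    omega
end

section
/- In the braid group B₄ with Artin generators a₁, a₂, a₃, the element (a₁a₂a₃a₁a₂a₁)(a₂a₃a₁a₂a₁)·Δ²·(a₁a₂a₃)·a₂ equals (a₁a₂a₃)⁹, where Δ² = (a₁a₂a₃)⁴ is the full twist. -/
/-- The braid relations on `n` generators (Artin's presentation of the braid group on `n+1`
strands). -/
def braidRels (n : ℕ) : Set (FreeGroup (Fin n)) :=
  {r | ∃ i j : Fin n,
    (((i : ℕ) + 1 = j) ∧
      r = FreeGroup.of i * FreeGroup.of j * FreeGroup.of i *
        (FreeGroup.of j * FreeGroup.of i * FreeGroup.of j)⁻¹) ∨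
    (((i : ℕ) + 2 ≤ j) ∧
      r = FreeGroup.of i * FreeGroup.of j * (FreeGroup.of j * FreeGroup.of i)⁻¹)}

/-- The braid group on `n+1` strands, presented by `n` Artin generators. -/
abbrev BraidGroup (n : ℕ) := PresentedGroup (braidRels n)

/-- Any braid relation maps to `1` in the braid group. -/
lemma braid_rel_eq {n : ℕ} {r : FreeGroup (Fin n)} (hr : r ∈ braidRels n) :
    PresentedGroup.mk (braidRels n) r = 1 :=
  (QuotientGroup.eq_one_iff _).mpr (Subgroup.subset_normalClosure hr)

lemma braidRel1 : (PresentedGroup.of 0 : BraidGroup 3) * .of 1 * .of 0 = .of 1 * .of 0 * .of 1 := by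
  have h := braid_rel_eq (n := 3) (r := FreeGroup.of 0 * FreeGroup.of 1 * FreeGroup.of 0 *
        (FreeGroup.of 1 * FreeGroup.of 0 * FreeGroup.of 1)⁻¹) ⟨0, 1, Or.inl ⟨rfl, rfl⟩⟩
  rw [map_mul, map_inv, mul_inv_eq_one] at h
  simpa [PresentedGroup.of, map_mul] using h

lemma braidRel2 : (PresentedGroup.of 1 : BraidGroup 3) * .of 2 * .of 1 = .of 2 * .of 1 * .of 2 := by
  have h := braid_rel_eq (n := 3) (r := FreeGroup.of 1 * FreeGroup.of 2 * FreeGroup.of 1 *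
        (FreeGroup.of 2 * FreeGroup.of 1 * FreeGroup.of 2)⁻¹) ⟨1, 2, Or.inl ⟨rfl, rfl⟩⟩
  rw [map_mul, map_inv, mul_inv_eq_one] at h
  simpa [PresentedGroup.of, map_mul] using h

lemma braidRel3 : (PresentedGroup.of 0 : BraidGroup 3) * .of 2 = .of 2 * .of 0 := by
  have h := braid_rel_eq (n := 3) (r := FreeGroup.of 0 * FreeGroup.of 2 *
        (FreeGroup.of 2 * FreeGroup.of 0)⁻¹) ⟨0, 2, Or.inr ⟨by norm_num, rfl⟩⟩
  rw [map_mul, map_inv, mul_inv_eq_one] at h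
  simpa [PresentedGroup.of, map_mul] using h

set_option maxHeartbeats 2000000 in
/-- In `B₄` with Artin generators `a₁, a₂, a₃`, one has
`(a₁a₂a₃a₁a₂a₁)(a₂a₃a₁a₂a₁)·Δ²·(a₁a₂a₃)·a₂ = (a₁a₂a₃)⁹` where `Δ² = (a₁a₂a₃)⁴`. -/
theorem braid_identity_B4 :
    let a1 : BraidGroup 3 := PresentedGroup.of 0
    let a2 : BraidGroup 3 := PresentedGroup.of 1
    let a3 : BraidGroup 3 := PresentedGroup.of 2
    (a1 * a2 * a3 * a1 * a2 * a1) * (a2 * a3 * a1 * a2 * a1) *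
      (a1 * a2 * a3) ^ 4 * (a1 * a2 * a3) * a2 = (a1 * a2 * a3) ^ 9 := by
  intro a1 a2 a3
  have r1 : a1 * a2 * a1 = a2 * a1 * a2 := braidRel1
  have r2 : a2 * a3 * a2 = a3 * a2 * a3 := braidRel2
  have r3 : a1 * a3 = a3 * a1 := braidRel3
  calc (a1 * a2 * a3 * a1 * a2 * a1) * (a2 * a3 * a1 * a2 * a1) *
      (a1 * a2 * a3) ^ 4 * (a1 * a2 * a3) * a2
    _ = a1*a2*a3*a1*a2*a1*a2*a3*(a1*a2*a1)*a1*a2*a3*a1*a2*a3*a1*a2*a3*a1*a2*a3*a1*a2*a3*a2 := by simp only [mul_assoc, pow_succ, pow_zero, one_mul]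
    _ = a1*a2*a3*a1*a2*a1*a2*a3*(a2*a1*a2)*a1*a2*a3*a1*a2*a3*a1*a2*a3*a1*a2*a3*a1*a2*a3*a2 := by rw [r1]
    _ = a1*a2*a3*a1*a2*a1*(a2*a3*a2)*a1*a2*a1*a2*a3*a1*a2*a3*a1*a2*a3*a1*a2*a3*a1*a2*a3*a2 := by simp only [mul_assoc, pow_succ, pow_zero, one_mul]
    _ = a1*a2*a3*a1*a2*a1*(a3*a2*a3)*a1*a2*a1*a2*a3*a1*a2*a3*a1*a2*a3*a1*a2*a3*a1*a2*a3*a2 := by rw [r2]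
    _ = a1*a2*a3*a1*a2*a1*a3*a2*a3*a1*a2*a1*a2*a3*a1*a2*a3*a1*a2*a3*a1*a2*a3*a1*(a2*a3*a2) := by simp only [mul_assoc, pow_succ, pow_zero, one_mul]
    _ = a1*a2*a3*a1*a2*a1*a3*a2*a3*a1*a2*a1*a2*a3*a1*a2*a3*a1*a2*a3*a1*a2*a3*a1*(a3*a2*a3) := by rw [r2]
    _ = a1*a2*a3*a1*a2*(a1*a3)*a2*a3*a1*a2*a1*a2*a3*a1*a2*a3*a1*a2*a3*a1*a2*a3*a1*a3*a2*a3 := by simp only [mul_assoc, pow_succ, pow_zero, one_mul]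
    _ = a1*a2*a3*a1*a2*(a3*a1)*a2*a3*a1*a2*a1*a2*a3*a1*a2*a3*a1*a2*a3*a1*a2*a3*a1*a3*a2*a3 := by rw [r3]
    _ = a1*a2*a3*a1*a2*a3*a1*a2*a3*a1*a2*a1*a2*a3*a1*a2*a3*a1*a2*a3*a1*a2*a3*(a1*a3)*a2*a3 := by simp only [mul_assoc, pow_succ, pow_zero, one_mul]
    _ = a1*a2*a3*a1*a2*a3*a1*a2*a3*a1*a2*a1*a2*a3*a1*a2*a3*a1*a2*a3*a1*a2*a3*(a3*a1)*a2*a3 := by rw [r3]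
    _ = a1*a2*a3*a1*a2*a3*a1*a2*a3*a1*a2*a1*a2*a3*a1*a2*(a3*a1)*a2*a3*a1*a2*a3*a3*a1*a2*a3 := by simp only [mul_assoc, pow_succ, pow_zero, one_mul]
    _ = a1*a2*a3*a1*a2*a3*a1*a2*a3*a1*a2*a1*a2*a3*a1*a2*(a1*a3)*a2*a3*a1*a2*a3*a3*a1*a2*a3 := by rw [← r3]
    _ = a1*a2*a3*a1*a2*a3*a1*a2*a3*a1*a2*a1*a2*a3*(a1*a2*a1)*a3*a2*a3*a1*a2*a3*a3*a1*a2*a3 := by simp only [mul_assoc, pow_succ, pow_zero, one_mul]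
    _ = a1*a2*a3*a1*a2*a3*a1*a2*a3*a1*a2*a1*a2*a3*(a2*a1*a2)*a3*a2*a3*a1*a2*a3*a3*a1*a2*a3 := by rw [r1]
    _ = a1*a2*a3*a1*a2*a3*a1*a2*a3*a1*a2*a1*a2*a3*a2*a1*a2*a3*a2*(a3*a1)*a2*a3*a3*a1*a2*a3 := by simp only [mul_assoc, pow_succ, pow_zero, one_mul]
    _ = a1*a2*a3*a1*a2*a3*a1*a2*a3*a1*a2*a1*a2*a3*a2*a1*a2*a3*a2*(a1*a3)*a2*a3*a3*a1*a2*a3 := by rw [← r3]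
    _ = a1*a2*a3*a1*a2*a3*a1*a2*a3*a1*a2*a1*a2*a3*a2*a1*a2*a3*a2*a1*(a3*a2*a3)*a3*a1*a2*a3 := by simp only [mul_assoc, pow_succ, pow_zero, one_mul]
    _ = a1*a2*a3*a1*a2*a3*a1*a2*a3*a1*a2*a1*a2*a3*a2*a1*a2*a3*a2*a1*(a2*a3*a2)*a3*a1*a2*a3 := by rw [← r2]
    _ = a1*a2*a3*a1*a2*a3*a1*a2*a3*a1*a2*a1*a2*a3*a2*a1*a2*a3*(a2*a1*a2)*a3*a2*a3*a1*a2*a3 := by simp only [mul_assoc, pow_succ, pow_zero, one_mul]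
    _ = a1*a2*a3*a1*a2*a3*a1*a2*a3*a1*a2*a1*a2*a3*a2*a1*a2*a3*(a1*a2*a1)*a3*a2*a3*a1*a2*a3 := by rw [← r1]
    _ = a1*a2*a3*a1*a2*a3*a1*a2*a3*a1*a2*a1*a2*a3*a2*a1*a2*a3*a1*a2*(a1*a3)*a2*a3*a1*a2*a3 := by simp only [mul_assoc, pow_succ, pow_zero, one_mul]
    _ = a1*a2*a3*a1*a2*a3*a1*a2*a3*a1*a2*a1*a2*a3*a2*a1*a2*a3*a1*a2*(a3*a1)*a2*a3*a1*a2*a3 := by rw [r3]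
    _ = a1*a2*a3*a1*a2*a3*a1*a2*a3*a1*a2*a1*(a2*a3*a2)*a1*a2*a3*a1*a2*a3*a1*a2*a3*a1*a2*a3 := by simp only [mul_assoc, pow_succ, pow_zero, one_mul]
    _ = a1*a2*a3*a1*a2*a3*a1*a2*a3*a1*a2*a1*(a3*a2*a3)*a1*a2*a3*a1*a2*a3*a1*a2*a3*a1*a2*a3 := by rw [r2]
    _ = a1*a2*a3*a1*a2*a3*a1*a2*a3*a1*a2*(a1*a3)*a2*a3*a1*a2*a3*a1*a2*a3*a1*a2*a3*a1*a2*a3 := by simp only [mul_assoc, pow_succ, pow_zero, one_mul]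
    _ = a1*a2*a3*a1*a2*a3*a1*a2*a3*a1*a2*(a3*a1)*a2*a3*a1*a2*a3*a1*a2*a3*a1*a2*a3*a1*a2*a3 := by rw [r3]
    _ = (a1*a2*a3)^9 := by simp only [mul_assoc, pow_succ, pow_zero, one_mul]
end

section
/- In the braid group B₈ with Artin generators a₁,…,a₇, let ◇ = a₄a₅a₆a₇a₃a₄a₅a₆a₂a₃a₄a₅a₁a₂a₃a₄. Then for all i ∈ {5,6,7}, ◇·aᵢ = a_{i-4}·◇ and ◇·a_{i-4} = aᵢ·◇. -/
/-- The Artin generator `aₖ` of `B₈` for `1 ≤ k ≤ 7`. -/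
noncomputable def a (k : ℕ) : BraidGroup 7 :=
  PresentedGroup.of ⟨(k - 1) % 7, Nat.mod_lt _ (by norm_num)⟩

/-- The element `◇ = a₄a₅a₆a₇a₃a₄a₅a₆a₂a₃a₄a₅a₁a₂a₃a₄` of `B₈`. -/
noncomputable def diamond : BraidGroup 7 :=
  a 4 * a 5 * a 6 * a 7 * a 3 * a 4 * a 5 * a 6 *
    a 2 * a 3 * a 4 * a 5 * a 1 * a 2 * a 3 * a 4

lemma rel_one {r : FreeGroup (Fin 7)} (h : r ∈ braidRels 7) :
    PresentedGroup.mk (braidRels 7) r = 1 :=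
  (QuotientGroup.eq_one_iff r).mpr (Subgroup.subset_normalClosure h)

lemma acomm (j k : ℕ) (h : 1 ≤ j ∧ j + 2 ≤ k ∧ k ≤ 7 := by omega) :
    ∀ x : BraidGroup 7, a j * (a k * x) = a k * (a j * x) := by
  obtain ⟨h1, h2, h3⟩ := h
  have e : a j * a k = a k * a j := by
    have hi : (j - 1) % 7 = j - 1 := Nat.mod_eq_of_lt (by omega)
    have hj : (k - 1) % 7 = k - 1 := Nat.mod_eq_of_lt (by omega)
    have hr : (FreeGroup.of (⟨(j-1)%7, Nat.mod_lt _ (by norm_num)⟩ : Fin 7) *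
        FreeGroup.of (⟨(k-1)%7, Nat.mod_lt _ (by norm_num)⟩ : Fin 7) *
        (FreeGroup.of (⟨(k-1)%7, Nat.mod_lt _ (by norm_num)⟩ : Fin 7) *
        FreeGroup.of (⟨(j-1)%7, Nat.mod_lt _ (by norm_num)⟩ : Fin 7))⁻¹) ∈ braidRels 7 := by
      refine ⟨_, _, Or.inr ⟨?_, rfl⟩⟩
      simp [hi, hj]; omega
    have := rel_one hr
    rw [map_mul, map_mul, map_inv, map_mul] at this
    have := mul_inv_eq_one.mp this
    exact this
  intro x
  rw [← mul_assoc, e, mul_assoc]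

lemma abraid (k m : ℕ) (h : 1 ≤ k ∧ k ≤ 6 ∧ m = k + 1 := by omega) :
    ∀ x : BraidGroup 7, a k * (a m * (a k * x)) = a m * (a k * (a m * x)) := by
  obtain ⟨h1, h2, rfl⟩ := h
  have e : a k * a (k+1) * a k = a (k+1) * a k * a (k+1) := by
    have hi : (k - 1) % 7 = k - 1 := Nat.mod_eq_of_lt (by omega)
    have hj : (k + 1 - 1) % 7 = k := Nat.mod_eq_of_lt (by omega)
    have hr : (FreeGroup.of (⟨(k-1)%7, Nat.mod_lt _ (by norm_num)⟩ : Fin 7) *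
        FreeGroup.of (⟨(k+1-1)%7, Nat.mod_lt _ (by norm_num)⟩ : Fin 7) *
        FreeGroup.of (⟨(k-1)%7, Nat.mod_lt _ (by norm_num)⟩ : Fin 7) *
        (FreeGroup.of (⟨(k+1-1)%7, Nat.mod_lt _ (by norm_num)⟩ : Fin 7) *
        FreeGroup.of (⟨(k-1)%7, Nat.mod_lt _ (by norm_num)⟩ : Fin 7) *
        FreeGroup.of (⟨(k+1-1)%7, Nat.mod_lt _ (by norm_num)⟩ : Fin 7))⁻¹) ∈ braidRels 7 := by
      refine ⟨_, _, Or.inl ⟨?_, rfl⟩⟩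
      simp [hi, hj]; omega
    have := rel_one hr
    rw [map_mul, map_mul, map_mul, map_inv, map_mul, map_mul] at this
    exact mul_inv_eq_one.mp this
  intro x
  calc a k * (a (k+1) * (a k * x)) = (a k * a (k+1) * a k) * x := by group
    _ = (a (k+1) * a k * a (k+1)) * x := by rw [e]
    _ = a (k+1) * (a k * (a (k+1) * x)) := by group


lemma run1_1 : ∀ x : BraidGroup 7, a 2 * (a 1 * (a 2 * (a 3 * (a 4 * (x))))) = a 1 * (a 2 * (a 3 * (a 4 * (a 1 * (x))))) := by
  intro x
  conv_lhs => rw [← abraid 1 2, acomm 1 3, acomm 1 4]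

lemma run2_1 : ∀ x : BraidGroup 7, a 3 * (a 1 * (a 2 * (a 3 * (a 4 * (x))))) = a 1 * (a 2 * (a 3 * (a 4 * (a 2 * (x))))) := by
  intro x
  conv_lhs => rw [← acomm 1 3, ← abraid 2 3, acomm 2 4]

lemma run3_1 : ∀ x : BraidGroup 7, a 4 * (a 1 * (a 2 * (a 3 * (a 4 * (x))))) = a 1 * (a 2 * (a 3 * (a 4 * (a 3 * (x))))) := by
  intro x
  conv_lhs => rw [← acomm 1 4, ← acomm 2 4, ← abraid 3 4]

lemma run1_2 : ∀ x : BraidGroup 7, a 3 * (a 2 * (a 3 * (a 4 * (a 5 * (x))))) = a 2 * (a 3 * (a 4 * (a 5 * (a 2 * (x))))) := by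
  intro x
  conv_lhs => rw [← abraid 2 3, acomm 2 4, acomm 2 5]

lemma run2_2 : ∀ x : BraidGroup 7, a 4 * (a 2 * (a 3 * (a 4 * (a 5 * (x))))) = a 2 * (a 3 * (a 4 * (a 5 * (a 3 * (x))))) := by
  intro x
  conv_lhs => rw [← acomm 2 4, ← abraid 3 4, acomm 3 5]

lemma run3_2 : ∀ x : BraidGroup 7, a 5 * (a 2 * (a 3 * (a 4 * (a 5 * (x))))) = a 2 * (a 3 * (a 4 * (a 5 * (a 4 * (x))))) := by
  intro x
  conv_lhs => rw [← acomm 2 5, ← acomm 3 5, ← abraid 4 5]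

lemma run1_3 : ∀ x : BraidGroup 7, a 4 * (a 3 * (a 4 * (a 5 * (a 6 * (x))))) = a 3 * (a 4 * (a 5 * (a 6 * (a 3 * (x))))) := by
  intro x
  conv_lhs => rw [← abraid 3 4, acomm 3 5, acomm 3 6]

lemma run2_3 : ∀ x : BraidGroup 7, a 5 * (a 3 * (a 4 * (a 5 * (a 6 * (x))))) = a 3 * (a 4 * (a 5 * (a 6 * (a 4 * (x))))) := by
  intro x
  conv_lhs => rw [← acomm 3 5, ← abraid 4 5, acomm 4 6]

lemma run3_3 : ∀ x : BraidGroup 7, a 6 * (a 3 * (a 4 * (a 5 * (a 6 * (x))))) = a 3 * (a 4 * (a 5 * (a 6 * (a 5 * (x))))) := by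
  intro x
  conv_lhs => rw [← acomm 3 6, ← acomm 4 6, ← abraid 5 6]

lemma run1_4 : ∀ x : BraidGroup 7, a 5 * (a 4 * (a 5 * (a 6 * (a 7 * (x))))) = a 4 * (a 5 * (a 6 * (a 7 * (a 4 * (x))))) := by
  intro x
  conv_lhs => rw [← abraid 4 5, acomm 4 6, acomm 4 7]

lemma run2_4 : ∀ x : BraidGroup 7, a 6 * (a 4 * (a 5 * (a 6 * (a 7 * (x))))) = a 4 * (a 5 * (a 6 * (a 7 * (a 5 * (x))))) := by
  intro x
  conv_lhs => rw [← acomm 4 6, ← abraid 5 6, acomm 5 7]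

lemma run3_4 : ∀ x : BraidGroup 7, a 7 * (a 4 * (a 5 * (a 6 * (a 7 * (x))))) = a 4 * (a 5 * (a 6 * (a 7 * (a 6 * (x))))) := by
  intro x
  conv_lhs => rw [← acomm 4 7, ← acomm 5 7, ← abraid 6 7]

lemma Cc1 : ∀ x : BraidGroup 7, a 1 * (a 2 * (a 3 * (a 4 * (a 5 * (a 1 * (a 2 * (a 3 * (a 4 * (x))))))))) = a 2 * (a 3 * (a 4 * (a 5 * (a 1 * (a 2 * (a 3 * (a 4 * (a 5 * (x))))))))) := by
  intro x
  conv_lhs => rw [← acomm 1 5, ← acomm 1 4, ← acomm 1 3, abraid 1 2, ← acomm 2 5, ← acomm 2 4, abraid 2 3, ← acomm 3 5, abraid 3 4, abraid 4 5, acomm 1 3, acomm 2 4, acomm 1 4, acomm 3 5, acomm 2 5, acomm 1 5]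

lemma Cc2 : ∀ x : BraidGroup 7, a 2 * (a 3 * (a 4 * (a 5 * (a 6 * (a 2 * (a 3 * (a 4 * (a 5 * (x))))))))) = a 3 * (a 4 * (a 5 * (a 6 * (a 2 * (a 3 * (a 4 * (a 5 * (a 6 * (x))))))))) := by
  intro x
  conv_lhs => rw [← acomm 2 6, ← acomm 2 5, ← acomm 2 4, abraid 2 3, ← acomm 3 6, ← acomm 3 5, abraid 3 4, ← acomm 4 6, abraid 4 5, abraid 5 6, acomm 2 4, acomm 3 5, acomm 2 5, acomm 4 6, acomm 3 6, acomm 2 6]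

lemma Cc3 : ∀ x : BraidGroup 7, a 3 * (a 4 * (a 5 * (a 6 * (a 7 * (a 3 * (a 4 * (a 5 * (a 6 * (x))))))))) = a 4 * (a 5 * (a 6 * (a 7 * (a 3 * (a 4 * (a 5 * (a 6 * (a 7 * (x))))))))) := by
  intro x
  conv_lhs => rw [← acomm 3 7, ← acomm 3 6, ← acomm 3 5, abraid 3 4, ← acomm 4 7, ← acomm 4 6, abraid 4 5, ← acomm 5 7, abraid 5 6, abraid 6 7, acomm 3 5, acomm 4 6, acomm 3 6, acomm 5 7, acomm 4 7, acomm 3 7]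

lemma dmul : ∀ x : BraidGroup 7, diamond * x = a 4 * (a 5 * (a 6 * (a 7 * (a 3 * (a 4 * (a 5 * (a 6 * (a 2 * (a 3 * (a 4 * (a 5 * (a 1 * (a 2 * (a 3 * (a 4 * (x)))))))))))))))) := by
  intro x
  simp only [diamond, mul_assoc]

lemma A1 : ∀ x : BraidGroup 7, diamond * (a 5 * x) = a 1 * (diamond * x) := by
  intro x
  rw [dmul (a 5 * x), dmul x]
  conv_rhs => rw [acomm 1 4, acomm 1 5, acomm 1 6, acomm 1 7, acomm 1 3, acomm 1 4, acomm 1 5, acomm 1 6, Cc1]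

lemma A2 : ∀ x : BraidGroup 7, diamond * (a 6 * x) = a 2 * (diamond * x) := by
  intro x
  rw [dmul (a 6 * x), dmul x]
  conv_rhs => rw [acomm 2 4, acomm 2 5, acomm 2 6, acomm 2 7, Cc2]
  conv_lhs => rw [acomm 4 6, acomm 3 6, acomm 2 6, acomm 1 6]

lemma A3 : ∀ x : BraidGroup 7, diamond * (a 7 * x) = a 3 * (diamond * x) := by
  intro x
  rw [dmul (a 7 * x), dmul x]
  conv_rhs => rw [Cc3]
  conv_lhs => rw [acomm 4 7, acomm 3 7, acomm 2 7, acomm 1 7, acomm 5 7, acomm 4 7, acomm 3 7, acomm 2 7]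

lemma B1 : ∀ x : BraidGroup 7, diamond * (a 1 * x) = a 5 * (diamond * x) := by
  intro x
  rw [dmul (a 1 * x), dmul x]
  conv_rhs => rw [run1_4, run1_3, run1_2, run1_1]

lemma B2 : ∀ x : BraidGroup 7, diamond * (a 2 * x) = a 6 * (diamond * x) := by
  intro x
  rw [dmul (a 2 * x), dmul x]
  conv_rhs => rw [run2_4, run2_3, run2_2, run2_1]

lemma B3 : ∀ x : BraidGroup 7, diamond * (a 3 * x) = a 7 * (diamond * x) := by
  intro x
  rw [dmul (a 3 * x), dmul x]
  conv_rhs => rw [run3_4, run3_3, run3_2, run3_1]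


/-- In `B₈`, for all `i ∈ {5,6,7}`, `◇·aᵢ = a_{i-4}·◇` and `◇·a_{i-4} = aᵢ·◇`. -/
theorem diamond_commutation :
    ∀ i ∈ ({5, 6, 7} : Set ℕ),
      diamond * a i = a (i - 4) * diamond ∧ diamond * a (i - 4) = a i * diamond := by
  intro i hi
  have h1 := A1 1; have h2 := A2 1; have h3 := A3 1
  have g1 := B1 1; have g2 := B2 1; have g3 := B3 1
  simp only [mul_one] at h1 h2 h3 g1 g2 g3
  simp only [Set.mem_insert_iff, Set.mem_singleton_iff] at hi
  rcases hi with rfl | rfl | rfl <;> norm_num <;> constructor <;> assumption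
end

section
/- In the braid group B₈ with Artin generators a₁,…,a₇, let ◇ = a₄a₅a₆a₇a₃a₄a₅a₆a₂a₃a₄a₅a₁a₂a₃a₄. Then (a₁a₂a₃a₄a₅a₆a₇)(a₁a₂a₃a₄a₅a₆)⁴ = a₁a₂a₃a₁a₂a₁·◇·a₆a₅a₆·(a₁a₂a₃a₄a₅a₆). -/
private lemma braid_comm {i j : Fin 7} (h : (i : ℕ) + 2 ≤ j) :
    (PresentedGroup.of i : BraidGroup 7) * PresentedGroup.of j =
      PresentedGroup.of j * PresentedGroup.of i := by
  have hm : FreeGroup.of i * FreeGroup.of j * (FreeGroup.of j * FreeGroup.of i)⁻¹ ∈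
      Subgroup.normalClosure (braidRels 7) :=
    Subgroup.subset_normalClosure ⟨i, j, Or.inr ⟨h, rfl⟩⟩
  have h1 : PresentedGroup.mk (braidRels 7)
      (FreeGroup.of i * FreeGroup.of j * (FreeGroup.of j * FreeGroup.of i)⁻¹) = 1 :=
    (QuotientGroup.eq_one_iff _).mpr hm
  simp only [map_mul, map_inv] at h1
  exact mul_inv_eq_one.mp h1

private lemma acomm_s15 (x y : ℕ) (hx : 1 ≤ x) (hxy : x + 2 ≤ y) (hy : y ≤ 7) :
    a x * a y = a y * a x := by
  unfold a
  apply braid_comm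
  show (x - 1) % 7 + 2 ≤ (y - 1) % 7
  rw [Nat.mod_eq_of_lt (by omega), Nat.mod_eq_of_lt (by omega)]
  omega

private noncomputable def g (l : List ℕ) : BraidGroup 7 := (l.map a).prod

private lemma step (p s : List ℕ) (x y : ℕ) (h : a x * a y = a y * a x) :
    g (p ++ x :: y :: s) = g (p ++ y :: x :: s) := by
  simp only [g, List.map_append, List.prod_append, List.map_cons, List.prod_cons]
  congr 1
  rw [← mul_assoc, h, mul_assoc]

/-- In `B₈`: `(a₁a₂a₃a₄a₅a₆a₇)(a₁a₂a₃a₄a₅a₆)⁴ = a₁a₂a₃a₁a₂a₁·◇·a₆a₅a₆·(a₁a₂a₃a₄a₅a₆)`. -/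
theorem beta_identity :
    (a 1 * a 2 * a 3 * a 4 * a 5 * a 6 * a 7) *
      (a 1 * a 2 * a 3 * a 4 * a 5 * a 6) ^ 4 =
    a 1 * a 2 * a 3 * a 1 * a 2 * a 1 * diamond * (a 6 * a 5 * a 6) *
      (a 1 * a 2 * a 3 * a 4 * a 5 * a 6) := by
  have key : g [1, 2, 3, 4, 5, 6, 7, 1, 2, 3, 4, 5, 6, 1, 2, 3, 4, 5, 6, 1, 2, 3, 4, 5, 6, 1, 2, 3, 4, 5, 6] = g [1, 2, 3, 1, 2, 1, 4, 5, 6, 7, 3, 4, 5, 6, 2, 3, 4, 5, 1, 2, 3, 4, 6, 5, 6, 1, 2, 3, 4, 5, 6] := by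
    calc g [1, 2, 3, 4, 5, 6, 7, 1, 2, 3, 4, 5, 6, 1, 2, 3, 4, 5, 6, 1, 2, 3, 4, 5, 6, 1, 2, 3, 4, 5, 6] = g [1, 2, 3, 4, 5, 6, 1, 7, 2, 3, 4, 5, 6, 1, 2, 3, 4, 5, 6, 1, 2, 3, 4, 5, 6, 1, 2, 3, 4, 5, 6] := step [1, 2, 3, 4, 5, 6] [2, 3, 4, 5, 6, 1, 2, 3, 4, 5, 6, 1, 2, 3, 4, 5, 6, 1, 2, 3, 4, 5, 6] 7 1 (acomm_s15 1 7 (by norm_num) (by norm_num) (by norm_num)).symm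
      _ = g [1, 2, 3, 4, 5, 1, 6, 7, 2, 3, 4, 5, 6, 1, 2, 3, 4, 5, 6, 1, 2, 3, 4, 5, 6, 1, 2, 3, 4, 5, 6] := step [1, 2, 3, 4, 5] [7, 2, 3, 4, 5, 6, 1, 2, 3, 4, 5, 6, 1, 2, 3, 4, 5, 6, 1, 2, 3, 4, 5, 6] 6 1 (acomm_s15 1 6 (by norm_num) (by norm_num) (by norm_num)).symm
      _ = g [1, 2, 3, 4, 1, 5, 6, 7, 2, 3, 4, 5, 6, 1, 2, 3, 4, 5, 6, 1, 2, 3, 4, 5, 6, 1, 2, 3, 4, 5, 6] := step [1, 2, 3, 4] [6, 7, 2, 3, 4, 5, 6, 1, 2, 3, 4, 5, 6, 1, 2, 3, 4, 5, 6, 1, 2, 3, 4, 5, 6] 5 1 (acomm_s15 1 5 (by norm_num) (by norm_num) (by norm_num)).symm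
      _ = g [1, 2, 3, 1, 4, 5, 6, 7, 2, 3, 4, 5, 6, 1, 2, 3, 4, 5, 6, 1, 2, 3, 4, 5, 6, 1, 2, 3, 4, 5, 6] := step [1, 2, 3] [5, 6, 7, 2, 3, 4, 5, 6, 1, 2, 3, 4, 5, 6, 1, 2, 3, 4, 5, 6, 1, 2, 3, 4, 5, 6] 4 1 (acomm_s15 1 4 (by norm_num) (by norm_num) (by norm_num)).symm
      _ = g [1, 2, 3, 1, 4, 5, 6, 2, 7, 3, 4, 5, 6, 1, 2, 3, 4, 5, 6, 1, 2, 3, 4, 5, 6, 1, 2, 3, 4, 5, 6] := step [1, 2, 3, 1, 4, 5, 6] [3, 4, 5, 6, 1, 2, 3, 4, 5, 6, 1, 2, 3, 4, 5, 6, 1, 2, 3, 4, 5, 6] 7 2 (acomm_s15 2 7 (by norm_num) (by norm_num) (by norm_num)).symm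
      _ = g [1, 2, 3, 1, 4, 5, 2, 6, 7, 3, 4, 5, 6, 1, 2, 3, 4, 5, 6, 1, 2, 3, 4, 5, 6, 1, 2, 3, 4, 5, 6] := step [1, 2, 3, 1, 4, 5] [7, 3, 4, 5, 6, 1, 2, 3, 4, 5, 6, 1, 2, 3, 4, 5, 6, 1, 2, 3, 4, 5, 6] 6 2 (acomm_s15 2 6 (by norm_num) (by norm_num) (by norm_num)).symm
      _ = g [1, 2, 3, 1, 4, 2, 5, 6, 7, 3, 4, 5, 6, 1, 2, 3, 4, 5, 6, 1, 2, 3, 4, 5, 6, 1, 2, 3, 4, 5, 6] := step [1, 2, 3, 1, 4] [6, 7, 3, 4, 5, 6, 1, 2, 3, 4, 5, 6, 1, 2, 3, 4, 5, 6, 1, 2, 3, 4, 5, 6] 5 2 (acomm_s15 2 5 (by norm_num) (by norm_num) (by norm_num)).symm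
      _ = g [1, 2, 3, 1, 2, 4, 5, 6, 7, 3, 4, 5, 6, 1, 2, 3, 4, 5, 6, 1, 2, 3, 4, 5, 6, 1, 2, 3, 4, 5, 6] := step [1, 2, 3, 1] [5, 6, 7, 3, 4, 5, 6, 1, 2, 3, 4, 5, 6, 1, 2, 3, 4, 5, 6, 1, 2, 3, 4, 5, 6] 4 2 (acomm_s15 2 4 (by norm_num) (by norm_num) (by norm_num)).symm
      _ = g [1, 2, 3, 1, 2, 4, 5, 6, 7, 3, 4, 5, 1, 6, 2, 3, 4, 5, 6, 1, 2, 3, 4, 5, 6, 1, 2, 3, 4, 5, 6] := step [1, 2, 3, 1, 2, 4, 5, 6, 7, 3, 4, 5] [2, 3, 4, 5, 6, 1, 2, 3, 4, 5, 6, 1, 2, 3, 4, 5, 6] 6 1 (acomm_s15 1 6 (by norm_num) (by norm_num) (by norm_num)).symm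
      _ = g [1, 2, 3, 1, 2, 4, 5, 6, 7, 3, 4, 1, 5, 6, 2, 3, 4, 5, 6, 1, 2, 3, 4, 5, 6, 1, 2, 3, 4, 5, 6] := step [1, 2, 3, 1, 2, 4, 5, 6, 7, 3, 4] [6, 2, 3, 4, 5, 6, 1, 2, 3, 4, 5, 6, 1, 2, 3, 4, 5, 6] 5 1 (acomm_s15 1 5 (by norm_num) (by norm_num) (by norm_num)).symm
      _ = g [1, 2, 3, 1, 2, 4, 5, 6, 7, 3, 1, 4, 5, 6, 2, 3, 4, 5, 6, 1, 2, 3, 4, 5, 6, 1, 2, 3, 4, 5, 6] := step [1, 2, 3, 1, 2, 4, 5, 6, 7, 3] [5, 6, 2, 3, 4, 5, 6, 1, 2, 3, 4, 5, 6, 1, 2, 3, 4, 5, 6] 4 1 (acomm_s15 1 4 (by norm_num) (by norm_num) (by norm_num)).symm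
      _ = g [1, 2, 3, 1, 2, 4, 5, 6, 7, 1, 3, 4, 5, 6, 2, 3, 4, 5, 6, 1, 2, 3, 4, 5, 6, 1, 2, 3, 4, 5, 6] := step [1, 2, 3, 1, 2, 4, 5, 6, 7] [4, 5, 6, 2, 3, 4, 5, 6, 1, 2, 3, 4, 5, 6, 1, 2, 3, 4, 5, 6] 3 1 (acomm_s15 1 3 (by norm_num) (by norm_num) (by norm_num)).symm
      _ = g [1, 2, 3, 1, 2, 4, 5, 6, 7, 1, 3, 4, 5, 6, 2, 3, 4, 5, 1, 6, 2, 3, 4, 5, 6, 1, 2, 3, 4, 5, 6] := step [1, 2, 3, 1, 2, 4, 5, 6, 7, 1, 3, 4, 5, 6, 2, 3, 4, 5] [2, 3, 4, 5, 6, 1, 2, 3, 4, 5, 6] 6 1 (acomm_s15 1 6 (by norm_num) (by norm_num) (by norm_num)).symm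
      _ = g [1, 2, 3, 1, 2, 4, 5, 6, 7, 1, 3, 4, 5, 6, 2, 3, 4, 5, 1, 2, 6, 3, 4, 5, 6, 1, 2, 3, 4, 5, 6] := step [1, 2, 3, 1, 2, 4, 5, 6, 7, 1, 3, 4, 5, 6, 2, 3, 4, 5, 1] [3, 4, 5, 6, 1, 2, 3, 4, 5, 6] 6 2 (acomm_s15 2 6 (by norm_num) (by norm_num) (by norm_num)).symm
      _ = g [1, 2, 3, 1, 2, 4, 5, 6, 7, 1, 3, 4, 5, 6, 2, 3, 4, 5, 1, 2, 3, 6, 4, 5, 6, 1, 2, 3, 4, 5, 6] := step [1, 2, 3, 1, 2, 4, 5, 6, 7, 1, 3, 4, 5, 6, 2, 3, 4, 5, 1, 2] [4, 5, 6, 1, 2, 3, 4, 5, 6] 6 3 (acomm_s15 3 6 (by norm_num) (by norm_num) (by norm_num)).symm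
      _ = g [1, 2, 3, 1, 2, 4, 5, 6, 7, 1, 3, 4, 5, 6, 2, 3, 4, 5, 1, 2, 3, 4, 6, 5, 6, 1, 2, 3, 4, 5, 6] := step [1, 2, 3, 1, 2, 4, 5, 6, 7, 1, 3, 4, 5, 6, 2, 3, 4, 5, 1, 2, 3] [5, 6, 1, 2, 3, 4, 5, 6] 6 4 (acomm_s15 4 6 (by norm_num) (by norm_num) (by norm_num)).symm
      _ = g [1, 2, 3, 1, 2, 4, 5, 6, 1, 7, 3, 4, 5, 6, 2, 3, 4, 5, 1, 2, 3, 4, 6, 5, 6, 1, 2, 3, 4, 5, 6] := step [1, 2, 3, 1, 2, 4, 5, 6] [3, 4, 5, 6, 2, 3, 4, 5, 1, 2, 3, 4, 6, 5, 6, 1, 2, 3, 4, 5, 6] 7 1 (acomm_s15 1 7 (by norm_num) (by norm_num) (by norm_num)).symm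
      _ = g [1, 2, 3, 1, 2, 4, 5, 1, 6, 7, 3, 4, 5, 6, 2, 3, 4, 5, 1, 2, 3, 4, 6, 5, 6, 1, 2, 3, 4, 5, 6] := step [1, 2, 3, 1, 2, 4, 5] [7, 3, 4, 5, 6, 2, 3, 4, 5, 1, 2, 3, 4, 6, 5, 6, 1, 2, 3, 4, 5, 6] 6 1 (acomm_s15 1 6 (by norm_num) (by norm_num) (by norm_num)).symm
      _ = g [1, 2, 3, 1, 2, 4, 1, 5, 6, 7, 3, 4, 5, 6, 2, 3, 4, 5, 1, 2, 3, 4, 6, 5, 6, 1, 2, 3, 4, 5, 6] := step [1, 2, 3, 1, 2, 4] [6, 7, 3, 4, 5, 6, 2, 3, 4, 5, 1, 2, 3, 4, 6, 5, 6, 1, 2, 3, 4, 5, 6] 5 1 (acomm_s15 1 5 (by norm_num) (by norm_num) (by norm_num)).symm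
      _ = g [1, 2, 3, 1, 2, 1, 4, 5, 6, 7, 3, 4, 5, 6, 2, 3, 4, 5, 1, 2, 3, 4, 6, 5, 6, 1, 2, 3, 4, 5, 6] := step [1, 2, 3, 1, 2] [5, 6, 7, 3, 4, 5, 6, 2, 3, 4, 5, 1, 2, 3, 4, 6, 5, 6, 1, 2, 3, 4, 5, 6] 4 1 (acomm_s15 1 4 (by norm_num) (by norm_num) (by norm_num)).symm
  have e1 : (a 1 * a 2 * a 3 * a 4 * a 5 * a 6 * a 7) *
      (a 1 * a 2 * a 3 * a 4 * a 5 * a 6) ^ 4 = g [1, 2, 3, 4, 5, 6, 7, 1, 2, 3, 4, 5, 6, 1, 2, 3, 4, 5, 6, 1, 2, 3, 4, 5, 6, 1, 2, 3, 4, 5, 6] := by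
    simp [g, pow_succ, mul_assoc]
  have e2 : a 1 * a 2 * a 3 * a 1 * a 2 * a 1 * diamond * (a 6 * a 5 * a 6) *
      (a 1 * a 2 * a 3 * a 4 * a 5 * a 6) = g [1, 2, 3, 1, 2, 1, 4, 5, 6, 7, 3, 4, 5, 6, 2, 3, 4, 5, 1, 2, 3, 4, 6, 5, 6, 1, 2, 3, 4, 5, 6] := by
    simp [g, diamond, mul_assoc]
  rw [e1, e2, key]
end

section
/- Suppose 2 ≤ p ≤ p', p < q, p' < q', gcd(p,q) = gcd(p',q') = 1, (p-1)(q-1) - (p'-1)(q'-1) = -2, and p' = p + 2. Then (p-1) divides 2(q'-2), and setting m = 2(q'-2)/(p-1), one has m ≥ 3, q = q' + m, q' = (m(p-1)+4)/2, and q = (m(p+1)+4)/2. -/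
/-- Case 1 (`p' - p = 2`) arithmetic reduction: if `2 ≤ p ≤ p'`, `p < q`, `p' < q'`, both pairs
coprime, `(p-1)(q-1) - (p'-1)(q'-1) = -2`, and `p' = p + 2`, then `(p-1) ∣ 2(q'-2)` and,
with `m = 2(q'-2)/(p-1)`, one has `m ≥ 3`, `q = q' + m`, `q' = (m(p-1)+4)/2`, and
`q = (m(p+1)+4)/2`. -/
theorem case_one_pprime_two (p q p' q' : ℕ) (hp : 2 ≤ p) (hpp' : p ≤ p')
    (hq : p < q) (hq' : p' < q')
    (hc : Nat.Coprime p q) (hc' : Nat.Coprime p' q')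
    (hgen : ((p : ℤ) - 1) * ((q : ℤ) - 1) - ((p' : ℤ) - 1) * ((q' : ℤ) - 1) = -2)
    (hpp : p' = p + 2) :
    (p - 1) ∣ 2 * (q' - 2) ∧
    (3 ≤ 2 * (q' - 2) / (p - 1) ∧
     q = q' + 2 * (q' - 2) / (p - 1) ∧
     q' = ((2 * (q' - 2) / (p - 1)) * (p - 1) + 4) / 2 ∧
     q = ((2 * (q' - 2) / (p - 1)) * (p + 1) + 4) / 2) := by
  subst hpp
  have hq'3 : p + 3 ≤ q' := by omega
  have key : ((p : ℤ) - 1) * ((q : ℤ) - (q' : ℤ)) = 2 * ((q' : ℤ) - 2) := by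
    push_cast at hgen
    linear_combination hgen
  have hqq' : q' ≤ q := by
    nlinarith [key, Int.ofNat_le.mpr hq'3, Int.ofNat_le.mpr hp]
  have keyN : (p - 1) * (q - q') = 2 * (q' - 2) := by
    zify [show 1 ≤ p by omega, show 2 ≤ q' by omega, hqq']
    linarith [key]
  have m_def : 2 * (q' - 2) / (p - 1) = q - q' := by
    rw [← keyN, Nat.mul_div_cancel_left _ (by omega)]
  have hm3 : 3 ≤ q - q' := by
    by_contra h
    push_neg at h
    set m := q - q' with hm
    interval_cases m <;> omega
  refine ⟨⟨q - q', keyN.symm⟩, ?_, ?_, ?_, ?_⟩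
  · omega
  · omega
  · rw [m_def, mul_comm, keyN]; omega
  · rw [m_def, show p + 1 = (p - 1) + 2 by omega, Nat.mul_add, mul_comm, keyN]; omega
end

section
/- Let K₋ and K₊ be knots such that K₊ is obtained from K₋ by changing a negative crossing into a positive one, and suppose ν⁺ is a knot invariant valued in ℕ satisfying ν⁺(K₊) − 1 ≤ ν⁺(K₋) ≤ ν⁺(K₊) for any such pair. If K and L are knots with ν⁺(K # −L) > 0 and ν⁺(L # −K) > 0, then the Gordian distance between K and L is at least 2. -/
/-- Axiomatized obstruction to Gordian distance one. Here `Knot` is an abstract type of knots,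
`sumNeg K L` stands for `K # −L`, and `up K₋ K₊` means that `K₊` is obtained from `K₋` by
changing a negative crossing into a positive one. We assume: the crossing change inequality
`ν⁺(K₊) − 1 ≤ ν⁺(K₋) ≤ ν⁺(K₊)`; compatibility of crossing changes with `K ↦ K # −L` and
`K ↦ L # −K`; and `ν⁺(K # −K) = 0`. If `ν⁺(K # −L) > 0` and `ν⁺(L # −K) > 0`, then the
Gordian distance between `K` and `L` is at least `2`: `K ≠ L` and `K`, `L` are not related
by a single crossing change. -/
theorem gordian_distance_ge_two {Knot : Type*}
    (sumNeg : Knot → Knot → Knot)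
    (up : Knot → Knot → Prop)
    (nu : Knot → ℕ)
    (hnu : ∀ Km Kp : Knot, up Km Kp → nu Kp ≤ nu Km + 1 ∧ nu Km ≤ nu Kp)
    (hcompat : ∀ K K' L : Knot, up K K' →
      up (sumNeg K L) (sumNeg K' L) ∧ up (sumNeg L K') (sumNeg L K))
    (hslice : ∀ K : Knot, nu (sumNeg K K) = 0)
    (K L : Knot) (hK : 0 < nu (sumNeg K L)) (hL : 0 < nu (sumNeg L K)) :
    K ≠ L ∧ ¬ up K L ∧ ¬ up L K := by
  refine ⟨?_, ?_, ?_⟩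
  · rintro rfl
    simp [hslice] at hK
  · intro h
    have h2 := (hcompat K L K h).2
    have := (hnu _ _ h2).2
    rw [hslice] at this
    omega
  · intro h
    have h2 := (hcompat L K L h).2
    have := (hnu _ _ h2).2
    rw [hslice] at this
    omega
end
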